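/- arXiv:2409.17149 — 4 statements merged into one kernel-verified Lean document; each statement's English description precedes it below -/
import Mathlib

section
/- For real β, γ > 0 with β ≠ γ, the integral ∫₀^∞ log(x) / ((x+β)(x+γ)) dx equals (log²(γ) − log²(β)) / (2(γ − β)). -/
/-!
The substitution `x ↦ βγ/x` preserves the measure `dx / ((x + β)(x + γ))` on `(0, ∞)` and turns
`log x` into `log (βγ) - log x`. Hence the integral `I` satisfies `I = log (βγ) · J - I`, where
`J = ∫₀^∞ dx / ((x + β)(x + γ)) = (log γ - log β) / (γ - β)` by partial fractions.
-/

open MeasureTheory Real Set Filter Topology Asymptotics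

theorem integral_comp_div_Ioi {E : Type*} [NormedAddCommGroup E] [NormedSpace ℝ E]
    (g : ℝ → E) {c : ℝ} (hc : 0 < c) :
    ∫ x in Ioi 0, (c / x ^ 2) • g (c / x) = ∫ y in Ioi 0, g y := by
  have himage : (fun x => c / x) '' Ioi (0 : ℝ) = Ioi 0 := by
    ext y
    refine ⟨?_, fun hy => ⟨c / y, div_pos hc hy, div_div_cancel₀ hc.ne'⟩⟩
    rintro ⟨x, hx, rfl⟩
    exact div_pos hc hx
  have hderiv : ∀ x ∈ Ioi (0 : ℝ),
      HasDerivWithinAt (fun x => c / x) (-(c / x ^ 2)) (Ioi 0) x := fun x hx => by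
    simpa [div_eq_mul_inv] using ((hasDerivAt_inv hx.ne').const_mul c).hasDerivWithinAt
  have hinj : InjOn (fun x => c / x) (Ioi (0 : ℝ)) := fun x _ y _ h =>
    inv_injective ((mul_right_inj' hc.ne').mp (by simpa [div_eq_mul_inv] using h))
  conv_rhs =>
    rw [← himage, integral_image_eq_integral_abs_deriv_smul measurableSet_Ioi hderiv hinj]
  refine setIntegral_congr_fun measurableSet_Ioi fun x hx => ?_
  rw [abs_neg, abs_of_pos (div_pos hc (pow_pos hx 2))]

/-- `log` is `o(x ^ ε)` at `∞` and `o(x ^ (-ε))` at `0`, so it does not spoil the convergence of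
the Mellin integral of `h` at `s = 1`. -/
theorem integrableOn_Ioi_log_mul {h : ℝ → ℝ} {a : ℝ} (ha : 1 < a)
    (hcont : ContinuousOn h (Ici 0)) (htop : h =O[atTop] (· ^ (-a))) :
    IntegrableOn (fun x => log x * h x) (Ioi 0) := by
  have hloc : LocallyIntegrableOn (fun x => log x * h x) (Ioi 0) :=
    ((continuousOn_log.mono fun x hx => ne_of_gt hx).mul
      (hcont.mono Ioi_subset_Ici_self)).locallyIntegrableOn measurableSet_Ioi
  have hbot : h =O[𝓝[>] 0] (· ^ (-0 : ℝ)) := by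
    simpa using ((hcont 0 self_mem_Ici).mono Ioi_subset_Ici_self).tendsto.isBigO_one ℝ
  simpa using mellin_convergent_of_isBigO_scalar (s := 1) hloc
    (isBigO_rpow_top_log_smul (by linarith : (a + 1) / 2 < a) htop) (by linarith)
    (isBigO_rpow_zero_log_smul (by norm_num : (0 : ℝ) < 1 / 2) hbot) (by norm_num)

theorem tendsto_log_add_sub_log_add_atTop (β γ : ℝ) :
    Tendsto (fun x => log (x + β) - log (x + γ)) atTop (𝓝 0) := by
  simpa using (tendsto_log_comp_add_sub_log β).sub (tendsto_log_comp_add_sub_log γ)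

section

variable {β γ : ℝ}

theorem integral_Ioi_comp_mul_div_div_add_mul_add (g : ℝ → ℝ) (hβ : 0 < β) (hγ : 0 < γ) :
    ∫ x in Ioi 0, g (β * γ / x) / ((x + β) * (x + γ)) =
      ∫ x in Ioi 0, g x / ((x + β) * (x + γ)) := by
  rw [← integral_comp_div_Ioi (fun y => g y / ((y + β) * (y + γ))) (mul_pos hβ hγ)]
  refine setIntegral_congr_fun measurableSet_Ioi fun x (hx : 0 < x) => ?_
  simp only [smul_eq_mul]
  field_simp
  ring

theorem integrableOn_Ioi_log_div_add_mul_add (hβ : 0 < β) (hγ : 0 < γ) :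
    IntegrableOn (fun x => log x / ((x + β) * (x + γ))) (Ioi 0) := by
  simp_rw [div_eq_mul_inv]
  refine integrableOn_Ioi_log_mul one_lt_two ?_ ?_
  · exact ContinuousOn.inv₀ (by fun_prop) fun x (hx : 0 ≤ x) => by positivity
  · refine IsBigO.of_bound 1 ?_
    filter_upwards [eventually_gt_atTop 0] with x hx
    rw [rpow_neg hx.le, rpow_two, one_mul, norm_inv, norm_inv, norm_of_nonneg (by positivity),
      norm_of_nonneg (by positivity)]
    exact inv_anti₀ (by positivity) (by nlinarith)

theorem hasDerivAt_log_add_sub_log_add_div (hne : β ≠ γ) {x : ℝ} (hxβ : 0 < x + β)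
    (hxγ : 0 < x + γ) :
    HasDerivAt (fun x => (log (x + β) - log (x + γ)) / (γ - β))
      (1 / ((x + β) * (x + γ))) x := by
  have hβ' := ((hasDerivAt_id' x).add_const β).log hxβ.ne'
  have hγ' := ((hasDerivAt_id' x).add_const γ).log hxγ.ne'
  refine ((hβ'.sub hγ').div_const (γ - β)).congr_deriv ?_
  field_simp [sub_ne_zero.mpr hne.symm]
  ring

theorem integrableOn_Ioi_one_div_add_mul_add (hβ : 0 < β) (hγ : 0 < γ) (hne : β ≠ γ) :
    IntegrableOn (fun x => 1 / ((x + β) * (x + γ))) (Ioi 0) :=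
  integrableOn_Ioi_deriv_of_nonneg'
    (fun x (hx : 0 ≤ x) => hasDerivAt_log_add_sub_log_add_div hne (by linarith) (by linarith))
    (fun x (hx : 0 < x) => one_div_nonneg.2 (mul_nonneg (by linarith) (by linarith)))
    (by simpa using (tendsto_log_add_sub_log_add_atTop β γ).div_const (γ - β))

theorem integral_Ioi_one_div_add_mul_add (hβ : 0 < β) (hγ : 0 < γ) (hne : β ≠ γ) :
    ∫ x in Ioi 0, 1 / ((x + β) * (x + γ)) = (log γ - log β) / (γ - β) := by
  rw [integral_Ioi_of_hasDerivAt_of_nonneg'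
    (fun x (hx : 0 ≤ x) => hasDerivAt_log_add_sub_log_add_div hne (by linarith) (by linarith))
    (fun x (hx : 0 < x) => one_div_nonneg.2 (mul_nonneg (by linarith) (by linarith)))
    (by simpa using (tendsto_log_add_sub_log_add_atTop β γ).div_const (γ - β)),
    zero_add, zero_add]
  ring

end

theorem stmt0 (β γ : ℝ) (hβ : 0 < β) (hγ : 0 < γ) (hne : β ≠ γ) :
    ∫ x in Set.Ioi (0:ℝ), Real.log x / ((x + β) * (x + γ)) =
      ((Real.log γ) ^ 2 - (Real.log β) ^ 2) / (2 * (γ - β)) := by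
  have hsymm : ∫ x in Ioi 0, log x / ((x + β) * (x + γ)) =
      ∫ x in Ioi 0, (log (β * γ) - log x) / ((x + β) * (x + γ)) := by
    rw [← integral_Ioi_comp_mul_div_div_add_mul_add log hβ hγ]
    refine setIntegral_congr_fun measurableSet_Ioi fun x (hx : 0 < x) => ?_
    rw [log_div (by positivity) hx.ne']
  have hsplit : ∫ x in Ioi 0, (log (β * γ) - log x) / ((x + β) * (x + γ)) =
      log (β * γ) * (∫ x in Ioi 0, 1 / ((x + β) * (x + γ))) -
        ∫ x in Ioi 0, log x / ((x + β) * (x + γ)) := by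
    simp_rw [sub_div, div_eq_mul_one_div (log (β * γ))]
    rw [integral_sub ((integrableOn_Ioi_one_div_add_mul_add hβ hγ hne).const_mul _)
      (integrableOn_Ioi_log_div_add_mul_add hβ hγ), integral_const_mul]
  rw [hsplit, integral_Ioi_one_div_add_mul_add hβ hγ hne, log_mul hβ.ne' hγ.ne'] at hsymm
  generalize ∫ x in Ioi 0, log x / ((x + β) * (x + γ)) = I at hsymm ⊢
  have hγβ : γ - β ≠ 0 := sub_ne_zero.mpr hne.symm
  field_simp at hsymm ⊢
  linear_combination hsymm
end

section
/- For real b with b > 2, ∫₀^∞ log(x) / (x² − b x + 1) dx = 0. -/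
/-!
With `r * s = 1`, the substitution `x ↦ x⁻¹` turns `log x dx / ((x - r) * (x - s))` into its
negative. So the pieces `(0, r - ε)` and `(1/(r - ε), ∞)` cancel, the integral over the
inversion-invariant interval `(r + ε, 1/(r + ε))` vanishes, and the principal-value sum reduces to
the integrals over `(1/(r + ε), s - ε)` and `(s + ε, 1/(r - ε))`, one on each side of the pole `s`.
There the integrand is `h s / (x - s)` plus a bounded function, with `h x = log x / (x - r)`, so
the sum is `h s * log ((r + ε) / (r - ε)) + O(ε)`, which tends to `0`.
-/

open MeasureTheory Real Filter Set Topology Interval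

section Inversion

variable {E : Type*} [NormedAddCommGroup E] [NormedSpace ℝ E] {f : ℝ → E} {S : Set ℝ}

lemma abs_deriv_inv_smul_eq_neg (hf : ∀ x, 0 < x → (x ^ 2)⁻¹ • f x⁻¹ = -f x) (hS0 : S ⊆ Ioi 0) :
    EqOn (fun x => |-(x ^ 2)⁻¹| • f x⁻¹) (fun x => -f x) S := fun x hx => by
  have hx : 0 < x := hS0 hx
  simp only [abs_neg, abs_inv, abs_pow, abs_of_pos hx, hf x hx]

theorem integrableOn_image_inv_iff (hf : ∀ x, 0 < x → (x ^ 2)⁻¹ • f x⁻¹ = -f x)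
    (hS : MeasurableSet S) (hS0 : S ⊆ Ioi 0) :
    IntegrableOn f (Inv.inv '' S) ↔ IntegrableOn f S := by
  rw [integrableOn_image_iff_integrableOn_abs_deriv_smul hS
      (fun x hx => (hasDerivAt_inv (hS0 hx).ne').hasDerivWithinAt) inv_injective.injOn,
    integrableOn_congr_fun (abs_deriv_inv_smul_eq_neg hf hS0) hS]
  exact integrable_neg_iff

theorem setIntegral_image_inv (hf : ∀ x, 0 < x → (x ^ 2)⁻¹ • f x⁻¹ = -f x)
    (hS : MeasurableSet S) (hS0 : S ⊆ Ioi 0) :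
    ∫ x in Inv.inv '' S, f x = -∫ x in S, f x := by
  rw [integral_image_eq_integral_abs_deriv_smul hS
      (fun x hx => (hasDerivAt_inv (hS0 hx).ne').hasDerivWithinAt) inv_injective.injOn,
    setIntegral_congr_fun hS (abs_deriv_inv_smul_eq_neg hf hS0), MeasureTheory.integral_neg]

lemma image_inv_Ioo_self_inv {a : ℝ} (ha : 0 < a) : Inv.inv '' Ioo a a⁻¹ = Ioo a a⁻¹ := by
  ext x
  rw [image_inv_eq_inv, Set.mem_inv]
  constructor
  · rintro ⟨h1, h2⟩
    have hx : 0 < x := inv_pos.1 (ha.trans h1)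
    exact ⟨(inv_lt_inv₀ hx ha).1 h2, (lt_inv_comm₀ ha hx).1 h1⟩
  · rintro ⟨h1, h2⟩
    have hx : 0 < x := ha.trans h1
    exact ⟨(lt_inv_comm₀ ha hx).2 h2, (inv_lt_inv₀ hx ha).2 h1⟩

theorem setIntegral_Ioo_inv_eq_zero (hf : ∀ x, 0 < x → (x ^ 2)⁻¹ • f x⁻¹ = -f x)
    {a : ℝ} (ha : 0 < a) : ∫ x in Ioo a a⁻¹, f x = 0 := by
  have h := setIntegral_image_inv hf (measurableSet_Ioo (b := a⁻¹)) fun x hx => ha.trans hx.1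
  rw [image_inv_Ioo_self_inv ha] at h
  linear_combination (norm := module) (2⁻¹ : ℝ) • h

end Inversion

section SimplePole

lemma integral_div_sub_eq {h : ℝ → ℝ} {s a c : ℝ} (hs : s ∉ [[a, c]])
    (hh : ContinuousOn h [[a, c]]) :
    ∫ x in a..c, h x / (x - s) = h s * log ((c - s) / (a - s)) + ∫ x in a..c, slope h s x := by
  have hne : ∀ x ∈ [[a, c]], x - s ≠ 0 := fun x hx => sub_ne_zero.2 (ne_of_mem_of_not_mem hx hs)
  have hsplit : EqOn (fun x => h x / (x - s)) (fun x => h s * (x - s)⁻¹ + slope h s x) [[a, c]] :=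
    fun x hx => by
      simp only [slope_def_field]
      field_simp [hne x hx]
      ring
  have hinv : ContinuousOn (fun x => (x - s)⁻¹) [[a, c]] :=
    (continuousOn_id.sub continuousOn_const).inv₀ hne
  have hslope : ContinuousOn (slope h s) [[a, c]] := by
    simp only [slope_fun_def_field]
    exact (hh.sub continuousOn_const).div (continuousOn_id.sub continuousOn_const) hne
  have h0 : (0 : ℝ) ∉ [[a - s, c - s]] := by
    intro h0
    apply hs
    rw [mem_uIcc] at h0 ⊢
    rcases h0 with h0 | h0
    · exact Or.inl ⟨by linarith [h0.1], by linarith [h0.2]⟩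
    · exact Or.inr ⟨by linarith [h0.1], by linarith [h0.2]⟩
  rw [intervalIntegral.integral_congr hsplit, intervalIntegral.integral_add
      ((hinv.intervalIntegrable).const_mul _) hslope.intervalIntegrable,
    intervalIntegral.integral_const_mul,
    intervalIntegral.integral_comp_sub_right (fun x => x⁻¹), integral_inv h0]

lemma norm_integral_div_sub_add_sub_log_le {h : ℝ → ℝ} {s a c ε M : ℝ} (hε : 0 < ε)
    (ha : a < s) (hc : s < c)
    (hP : ∀ x ∈ [[a, s - ε]] ∪ [[s + ε, c]], ContinuousAt h x ∧ ‖slope h s x‖ ≤ M) :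
    ‖(∫ x in a..s - ε, h x / (x - s)) + (∫ x in s + ε..c, h x / (x - s))
      - h s * log ((c - s) / (s - a))‖ ≤ M * (|s - ε - a| + |c - (s + ε)|) := by
  have hsl : s ∉ [[a, s - ε]] := fun hs => by
    rcases mem_uIcc.1 hs with hs | hs <;> linarith [hs.1, hs.2]
  have hsr : s ∉ [[s + ε, c]] := fun hs => by
    rcases mem_uIcc.1 hs with hs | hs <;> linarith [hs.1, hs.2]
  have hlog : log ((s - ε - s) / (a - s)) + log ((c - s) / (s + ε - s))
      = log ((c - s) / (s - a)) := by
    rw [show s - ε - s = -ε by ring, show s + ε - s = ε by ring,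
      ← log_mul (div_pos_of_neg_of_neg (by linarith) (by linarith)).ne'
        (div_pos (by linarith) hε).ne']
    congr 1
    field_simp [sub_ne_zero.2 ha.ne, sub_ne_zero.2 ha.ne']
    ring
  rw [integral_div_sub_eq hsl (continuousOn_of_forall_continuousAt fun x hx => (hP x (.inl hx)).1),
    integral_div_sub_eq hsr (continuousOn_of_forall_continuousAt fun x hx => (hP x (.inr hx)).1),
    ← hlog]
  calc _ = ‖(∫ x in a..s - ε, slope h s x) + ∫ x in s + ε..c, slope h s x‖ := by
        congr 1
        ring
    _ ≤ ‖∫ x in a..s - ε, slope h s x‖ + ‖∫ x in s + ε..c, slope h s x‖ := norm_add_le _ _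
    _ ≤ M * |s - ε - a| + M * |c - (s + ε)| := add_le_add
        (intervalIntegral.norm_integral_le_of_norm_le_const fun x hx =>
          (hP x (.inl (uIoc_subset_uIcc hx))).2)
        (intervalIntegral.norm_integral_le_of_norm_le_const fun x hx =>
          (hP x (.inr (uIoc_subset_uIcc hx))).2)
    _ = M * (|s - ε - a| + |c - (s + ε)|) := by ring

theorem tendsto_integral_div_sub_add_integral_div_sub {h : ℝ → ℝ} {s ρ : ℝ}
    (hcont : ∀ᶠ x in 𝓝 s, ContinuousAt h x) (hdiff : DifferentiableAt ℝ h s) {u v : ℝ → ℝ}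
    (hu : Tendsto u (𝓝[>] 0) (𝓝[<] s)) (hv : Tendsto v (𝓝[>] 0) (𝓝[>] s)) (hρ : 0 < ρ)
    (hratio : Tendsto (fun ε => (v ε - s) / (s - u ε)) (𝓝[>] 0) (𝓝 ρ)) :
    Tendsto (fun ε => (∫ x in u ε..s - ε, h x / (x - s)) + ∫ x in s + ε..v ε, h x / (x - s))
      (𝓝[>] 0) (𝓝 (h s * log ρ)) := by
  set M := ‖deriv h s‖ + 1
  obtain ⟨δ, hδ, hP⟩ : ∃ δ > 0, ∀ x ∈ Ioo (s - δ) s ∪ Ioo s (s + δ),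
      ContinuousAt h x ∧ ‖slope h s x‖ ≤ M := by
    have hev := (hcont.filter_mono nhdsWithin_le_nhds).and
      (hdiff.hasDerivAt.tendsto_slope.norm.eventually_lt_const (lt_add_one _))
    obtain ⟨δ, hδ, hball⟩ := Metric.eventually_nhds_iff.1 (eventually_nhdsWithin_iff.1 hev)
    refine ⟨δ, hδ, fun x hx => ?_⟩
    have hxs : dist x s < δ ∧ x ≠ s := by
      rw [Real.dist_eq, abs_sub_lt_iff]
      rcases hx with hx | hx
      · exact ⟨⟨by linarith [hx.2], by linarith [hx.1]⟩, hx.2.ne⟩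
      · exact ⟨⟨by linarith [hx.2], by linarith [hx.1]⟩, hx.1.ne'⟩
    exact (hball hxs.1 hxs.2).imp_right le_of_lt
  have hbound : ∀ᶠ ε in 𝓝[>] 0,
      ‖(∫ x in u ε..s - ε, h x / (x - s)) + (∫ x in s + ε..v ε, h x / (x - s))
        - h s * log ((v ε - s) / (s - u ε))‖ ≤ M * (|s - ε - u ε| + |v ε - (s + ε)|) := by
    filter_upwards [Ioo_mem_nhdsGT hδ, hu (Ioo_mem_nhdsLT (sub_lt_self s hδ)),
      hv (Ioo_mem_nhdsGT (lt_add_of_pos_right s hδ))] with ε hε huε hvε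
    refine norm_integral_div_sub_add_sub_log_le hε.1 huε.2 hvε.1 fun x hx => hP x ?_
    exact hx.imp
      (fun hx => ordConnected_Ioo.uIcc_subset huε ⟨by linarith [hε.2], by linarith [hε.1]⟩ hx)
      (fun hx => ordConnected_Ioo.uIcc_subset ⟨by linarith [hε.1], by linarith [hε.2]⟩ hvε hx)
  have hε : Tendsto (fun ε : ℝ => ε) (𝓝[>] 0) (𝓝 0) := nhdsWithin_le_nhds
  have hs : Tendsto (fun _ : ℝ => s) (𝓝[>] 0) (𝓝 s) := tendsto_const_nhds
  have hR : Tendsto (fun ε => M * (|s - ε - u ε| + |v ε - (s + ε)|)) (𝓝[>] 0) (𝓝 0) := by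
    simpa using (((hs.sub hε).sub (hu.mono_right nhdsWithin_le_nhds)).abs.add
      ((hv.mono_right nhdsWithin_le_nhds).sub (hs.add hε)).abs).const_mul M
  simpa using ((hratio.log hρ.ne').const_mul (h s)).add (squeeze_zero_norm' hbound hR)

end SimplePole

section Endpoints

variable {r : ℝ}

lemma tendsto_inv_add_nhdsLT (hr : 0 < r) :
    Tendsto (fun ε => (r + ε)⁻¹) (𝓝[>] 0) (𝓝[<] r⁻¹) := by
  have hε : Tendsto (fun ε : ℝ => ε) (𝓝[>] 0) (𝓝 0) := nhdsWithin_le_nhds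
  refine tendsto_nhdsWithin_iff.2 ⟨?_, ?_⟩
  · simpa using ((tendsto_const_nhds (x := r)).add hε).inv₀ (by simpa using hr.ne')
  · filter_upwards [self_mem_nhdsWithin] with ε (hε : 0 < ε)
    exact (inv_lt_inv₀ (by positivity) hr).2 (by linarith)

lemma tendsto_inv_sub_nhdsGT (hr : 0 < r) :
    Tendsto (fun ε => (r - ε)⁻¹) (𝓝[>] 0) (𝓝[>] r⁻¹) := by
  have hε : Tendsto (fun ε : ℝ => ε) (𝓝[>] 0) (𝓝 0) := nhdsWithin_le_nhds
  refine tendsto_nhdsWithin_iff.2 ⟨?_, ?_⟩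
  · simpa using ((tendsto_const_nhds (x := r)).sub hε).inv₀ (by simpa using hr.ne')
  · filter_upwards [Ioo_mem_nhdsGT hr] with ε hε
    exact (inv_lt_inv₀ hr (sub_pos.2 hε.2)).2 (by linarith [hε.1])

lemma tendsto_inv_sub_inv_div (hr : 0 < r) :
    Tendsto (fun ε => ((r - ε)⁻¹ - r⁻¹) / (r⁻¹ - (r + ε)⁻¹)) (𝓝[>] 0) (𝓝 1) := by
  have hε : Tendsto (fun ε : ℝ => ε) (𝓝[>] 0) (𝓝 0) := nhdsWithin_le_nhds
  have hlim : Tendsto (fun ε => (r + ε) / (r - ε)) (𝓝[>] 0) (𝓝 1) := by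
    have h := ((tendsto_const_nhds (x := r)).add hε).div
      ((tendsto_const_nhds (x := r)).sub hε) (by simpa using hr.ne')
    rwa [add_zero, sub_zero, div_self hr.ne'] at h
  refine hlim.congr' ?_
  filter_upwards [Ioo_mem_nhdsGT hr] with ε hε
  rw [inv_sub_inv (sub_pos.2 hε.2).ne' hr.ne', inv_sub_inv hr.ne' (by linarith [hε.1]),
    sub_sub_cancel, add_sub_cancel_left]
  have : ε ≠ 0 := hε.1.ne'
  field_simp

end Endpoints

lemma integrableOn_log_div_Icc {q : ℝ → ℝ} {a c : ℝ} (hac : a ≤ c)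
    (hq : ContinuousOn q (Icc a c)) (hq0 : ∀ x ∈ Icc a c, q x ≠ 0) :
    IntegrableOn (fun x => log x / q x) (Icc a c) := by
  have hlog : IntegrableOn log (Icc a c) :=
    (intervalIntegrable_iff_integrableOn_Icc_of_le hac).1 intervalIntegral.intervalIntegrable_log'
  simpa only [div_eq_mul_inv] using
    hlog.mul_continuousOn (g' := fun x => (q x)⁻¹) (hq.inv₀ hq0) isCompact_Icc

section LogDivQuadratic

variable {r s : ℝ}

lemma inv_sq_smul_log_div_inv (hrs : r * s = 1) {x : ℝ} (hx : x ≠ 0) :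
    (x ^ 2)⁻¹ • (log x⁻¹ / ((x⁻¹ - r) * (x⁻¹ - s))) = -(log x / ((x - r) * (x - s))) := by
  have hden : (x⁻¹ - r) * (x⁻¹ - s) = (x - r) * (x - s) / x ^ 2 := by
    field_simp
    linear_combination (x ^ 2 - 1) * hrs
  rw [smul_eq_mul, log_inv, hden, div_div_eq_mul_div]
  field_simp

lemma integrableOn_log_div_mul_sub_Icc {a c : ℝ} (hac : a ≤ c) (hr : r ∉ Icc a c)
    (hs : s ∉ Icc a c) : IntegrableOn (fun x => log x / ((x - r) * (x - s))) (Icc a c) :=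
  integrableOn_log_div_Icc hac (by fun_prop) fun x hx =>
    mul_ne_zero (sub_ne_zero.2 (ne_of_mem_of_not_mem hx hr))
      (sub_ne_zero.2 (ne_of_mem_of_not_mem hx hs))

lemma pv_log_div_mul_sub_eq {ε : ℝ} (hrs : r * s = 1) (hε : 0 < ε) (hεr : ε < r)
    (hr1 : r + ε < 1) :
    (∫ x in Ioo 0 (r - ε), log x / ((x - r) * (x - s))) +
        (∫ x in Ioo (r + ε) (s - ε), log x / ((x - r) * (x - s))) +
        ∫ x in Ioi (s + ε), log x / ((x - r) * (x - s)) =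
      (∫ x in (r + ε)⁻¹..s - ε, log x / ((x - r) * (x - s))) +
        ∫ x in s + ε..(r - ε)⁻¹, log x / ((x - r) * (x - s)) := by
  set F : ℝ → ℝ := fun x => log x / ((x - r) * (x - s))
  have hanti : ∀ x, 0 < x → (x ^ 2)⁻¹ • F x⁻¹ = -F x := fun x hx =>
    inv_sq_smul_log_div_inv hrs hx.ne'
  have hr : 0 < r := hε.trans hεr
  have hs : 1 < s := by nlinarith
  set p := (r + ε)⁻¹
  set q := (r - ε)⁻¹
  have hp : (r + ε) * p = 1 := mul_inv_cancel₀ (by positivity)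
  have hq : (r - ε) * q = 1 := mul_inv_cancel₀ (by linarith)
  have hrp : r + ε < p := by nlinarith
  have hps : p < s - ε := by nlinarith
  have hsq : s + ε < q := by nlinarith
  have hmid : ∫ x in Ioo (r + ε) (s - ε), F x = ∫ x in p..s - ε, F x := by
    rw [← Ioc_union_Ioo_eq_Ioo hrp.le hps,
      setIntegral_union (Ioc_disjoint_Ioi_same.mono_right Ioo_subset_Ioi_self) measurableSet_Ioo
        ((integrableOn_log_div_mul_sub_Icc hrp.le (fun h => by linarith [h.1])
          (fun h => by linarith [h.2])).mono_set Ioc_subset_Icc_self)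
        ((integrableOn_log_div_mul_sub_Icc hps.le (fun h => by linarith [h.1])
          (fun h => by linarith [h.2])).mono_set Ioo_subset_Icc_self),
      integral_Ioc_eq_integral_Ioo, setIntegral_Ioo_inv_eq_zero hanti (by positivity), zero_add,
      intervalIntegral.integral_of_le hps.le, integral_Ioc_eq_integral_Ioo]
  have htail : ∫ x in Ioi (s + ε), F x = (∫ x in s + ε..q, F x) - ∫ x in Ioo 0 (r - ε), F x := by
    have hpos : Ioo 0 (r - ε) ⊆ Ioi 0 := fun x hx => hx.1
    have himage : Inv.inv '' Ioo 0 (r - ε) = Ioi q := by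
      rw [image_inv_eq_inv, inv_Ioo_0_left (by linarith)]
    have hleft : IntegrableOn F (Ioo 0 (r - ε)) :=
      (integrableOn_log_div_mul_sub_Icc (by linarith) (fun h => by linarith [h.2])
        (fun h => by linarith [h.2])).mono_set Ioo_subset_Icc_self
    rw [← Ioc_union_Ioi_eq_Ioi hsq.le,
      setIntegral_union Ioc_disjoint_Ioi_same measurableSet_Ioi
        ((integrableOn_log_div_mul_sub_Icc hsq.le (fun h => by linarith [h.1])
          (fun h => by linarith [h.1])).mono_set Ioc_subset_Icc_self)
        (himage ▸ (integrableOn_image_inv_iff hanti measurableSet_Ioo hpos).2 hleft),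
      ← himage, setIntegral_image_inv hanti measurableSet_Ioo hpos,
      intervalIntegral.integral_of_le hsq.le]
    exact (sub_eq_add_neg _ _).symm
  rw [hmid, htail]
  ring

theorem tendsto_pv_log_div_mul_sub (hr : 0 < r) (hr1 : r < 1) (hrs : r * s = 1) :
    Tendsto (fun ε => (∫ x in Ioo 0 (r - ε), log x / ((x - r) * (x - s))) +
        (∫ x in Ioo (r + ε) (s - ε), log x / ((x - r) * (x - s))) +
        ∫ x in Ioi (s + ε), log x / ((x - r) * (x - s)))
      (𝓝[>] 0) (𝓝 0) := by
  obtain rfl : s = r⁻¹ := eq_inv_of_mul_eq_one_right hrs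
  have hrs' : r < r⁻¹ := hr1.trans ((one_lt_inv₀ hr).2 hr1)
  have hcont : ∀ᶠ x in 𝓝 r⁻¹, ContinuousAt (fun x => log x / (x - r)) x := by
    filter_upwards [lt_mem_nhds hrs'] with x hx
    exact (continuousAt_log (by linarith)).div (continuousAt_id.sub continuousAt_const)
      (sub_ne_zero.2 hx.ne')
  have hdiff : DifferentiableAt ℝ (fun x => log x / (x - r)) r⁻¹ :=
    (differentiableAt_log (by positivity)).div (differentiableAt_id.sub_const r)
      (sub_ne_zero.2 hrs'.ne')
  have hpole := tendsto_integral_div_sub_add_integral_div_sub hcont hdiff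
    (tendsto_inv_add_nhdsLT hr) (tendsto_inv_sub_nhdsGT hr) one_pos (tendsto_inv_sub_inv_div hr)
  simp only [div_div, log_one, mul_zero] at hpole
  refine hpole.congr' ?_
  filter_upwards [Ioo_mem_nhdsGT (lt_min hr (sub_pos.2 hr1))] with ε hε
  exact (pv_log_div_mul_sub_eq hrs hε.1 (hε.2.trans_le (min_le_left _ _))
    (by linarith [hε.2.trans_le (min_le_right _ _)])).symm

end LogDivQuadratic

/-- For `b > 2` the quadratic `x² − bx + 1` has two positive roots
`r₁ = (b − √(b²−4))/2 < r₂ = (b + √(b²−4))/2`; the principal value of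
`∫₀^∞ log x/(x² − bx + 1) dx` at these poles is `0`. -/
theorem stmt7 (b : ℝ) (hb : 2 < b) :
    Tendsto (fun ε : ℝ =>
        (∫ x in Set.Ioo (0:ℝ) ((b - Real.sqrt (b ^ 2 - 4)) / 2 - ε),
            Real.log x / (x ^ 2 - b * x + 1)) +
        (∫ x in Set.Ioo ((b - Real.sqrt (b ^ 2 - 4)) / 2 + ε)
            ((b + Real.sqrt (b ^ 2 - 4)) / 2 - ε),
            Real.log x / (x ^ 2 - b * x + 1)) +
        (∫ x in Set.Ioi ((b + Real.sqrt (b ^ 2 - 4)) / 2 + ε),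
            Real.log x / (x ^ 2 - b * x + 1)))
      (nhdsWithin 0 (Set.Ioi 0)) (nhds 0) := by
  set d := √(b ^ 2 - 4)
  have hd : d ^ 2 = b ^ 2 - 4 := sq_sqrt (by nlinarith)
  have hd0 : 0 < d := sqrt_pos.2 (by nlinarith)
  have hroots : ∀ x : ℝ, x ^ 2 - b * x + 1 = (x - (b - d) / 2) * (x - (b + d) / 2) := fun x => by
    linear_combination (1 / 4 : ℝ) * hd
  simp only [hroots]
  exact tendsto_pv_log_div_mul_sub (by nlinarith) (by nlinarith)
    (by linear_combination (-1 / 4 : ℝ) * hd)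
end

section
/- For real v with 0 < v < 2, v ≠ 1, and real b, γ > 0 with b ≠ γ, ∫₀^∞ x^{v−1} / ((x+b)(x+γ)²) dx = (π b^{v−1} / (sin(πv)(γ−b)²)) · (1 − (γ/b)^{v−1}·(1 + (1−v)(γ−b)/γ)). -/
/-!
The substitution `x = c t / (1 - t)` turns `∫₀^∞ x^(s-1) / (x + c)^a dx` into `c^(s-a) B(s, a - s)`;
for `a = 1` and `a = 2` the reflection formula `Γ(s) Γ(1 - s) = π / sin(π s)` evaluates it as
`π c^(s-1) / sin(π s)` and `π (1 - s) c^(s-2) / sin(π s)`. The integral of the theorem is reduced to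
these by the partial fractions
`1 / ((x + b)(x + γ)²) = (1 / ((x + b)(x + γ)) - 1 / (x + γ)²) / (γ - b)` and
`1 / ((x + b)(x + γ)) = (1 / (x + b) - 1 / (x + γ)) / (γ - b)`.
-/

open MeasureTheory Real Set

section RealBeta

lemma betaIntegrand_eqOn_ofReal (u w : ℝ) :
    EqOn (fun x : ℝ => (x : ℂ) ^ ((u : ℂ) - 1) * (1 - (x : ℂ)) ^ ((w : ℂ) - 1))
      (fun x => ((x ^ (u - 1) * (1 - x) ^ (w - 1) : ℝ) : ℂ)) (Ioo 0 1) := by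
  intro x hx
  have hx1 : 0 ≤ 1 - x := by linarith [hx.2]
  push_cast [Complex.ofReal_cpow hx.1.le, Complex.ofReal_cpow hx1]
  rfl

variable {u w : ℝ}

lemma integrableOn_rpow_mul_one_sub_rpow (hu : 0 < u) (hw : 0 < w) :
    IntegrableOn (fun x : ℝ => x ^ (u - 1) * (1 - x) ^ (w - 1)) (Ioo 0 1) := by
  have h := Complex.betaIntegral_convergent (u := u) (v := w) (by simpa) (by simpa)
  rw [intervalIntegrable_iff_integrableOn_Ioo_of_le zero_le_one] at h
  simpa [IntegrableOn] using (h.congr_fun (betaIntegrand_eqOn_ofReal u w) measurableSet_Ioo).re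

lemma integral_rpow_mul_one_sub_rpow (hu : 0 < u) (hw : 0 < w) :
    ∫ x in Ioo (0 : ℝ) 1, x ^ (u - 1) * (1 - x) ^ (w - 1) = Gamma u * Gamma w / Gamma (u + w) := by
  have h := Complex.betaIntegral_eq_Gamma_mul_div u w (by simpa) (by simpa)
  rw [Complex.betaIntegral, intervalIntegral.integral_of_le zero_le_one,
    integral_Ioc_eq_integral_Ioo, setIntegral_congr_fun measurableSet_Ioo
    (betaIntegrand_eqOn_ofReal u w), integral_complex_ofReal, ← Complex.ofReal_add,
    Complex.Gamma_ofReal, Complex.Gamma_ofReal, Complex.Gamma_ofReal] at h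
  exact_mod_cast h

end RealBeta

section Substitution

variable {c : ℝ}

lemma image_mul_div_one_sub_Ioo (hc : 0 < c) :
    (fun t : ℝ => c * t / (1 - t)) '' Ioo 0 1 = Ioi 0 := by
  ext x
  constructor
  · rintro ⟨t, ⟨ht0, ht1⟩, rfl⟩
    exact div_pos (mul_pos hc ht0) (by linarith)
  · intro (hx : 0 < x)
    refine ⟨x / (x + c), ⟨by positivity, (div_lt_one (by positivity)).2 (by linarith)⟩, ?_⟩
    have : 1 - x / (x + c) = c / (x + c) := by field_simp; ring
    simp only [this]
    field_simp

lemma injOn_mul_div_one_sub (hc : c ≠ 0) : InjOn (fun t : ℝ => c * t / (1 - t)) (Ioo 0 1) := by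
  intro t ⟨_, ht1⟩ t' ⟨_, ht1'⟩ h
  have : 1 - t ≠ 0 := by linarith
  have : 1 - t' ≠ 0 := by linarith
  field_simp at h
  nlinarith

lemma hasDerivAt_mul_div_one_sub (c : ℝ) {t : ℝ} (ht : t ≠ 1) :
    HasDerivAt (fun t : ℝ => c * t / (1 - t)) (c / (1 - t) ^ 2) t := by
  have h1 : 1 - t ≠ 0 := sub_ne_zero.2 ht.symm
  refine (((hasDerivAt_id' t).const_mul c).div ((hasDerivAt_id' t).const_sub 1) h1).congr_deriv ?_
  field_simp
  ring

lemma abs_deriv_smul_rpow_div_add_rpow_eqOn (a s : ℝ) (hc : 0 < c) :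
    EqOn (fun t : ℝ =>
        |c / (1 - t) ^ 2| • ((c * t / (1 - t)) ^ (s - 1) / (c * t / (1 - t) + c) ^ a))
      (fun t => c ^ (s - a) * (t ^ (s - 1) * (1 - t) ^ (a - s - 1))) (Ioo 0 1) := by
  intro t ⟨ht0, ht1⟩
  have h1t : 0 < 1 - t := by linarith
  have hsum : c * t / (1 - t) + c = c / (1 - t) := by field_simp; ring
  simp only [hsum, smul_eq_mul, abs_of_pos (by positivity : 0 < c / (1 - t) ^ 2)]
  refine log_injOn_pos (by simp only [mem_Ioi]; positivity)
    (by simp only [mem_Ioi]; positivity) ?_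
  simp (disch := positivity) only [Real.log_mul, Real.log_div, Real.log_rpow, Real.log_pow]
  push_cast
  ring

variable {a s : ℝ}

lemma integrableOn_rpow_div_add_rpow_Ioi (hs : 0 < s) (hsa : s < a) (hc : 0 < c) :
    IntegrableOn (fun x : ℝ => x ^ (s - 1) / (x + c) ^ a) (Ioi 0) := by
  rw [← image_mul_div_one_sub_Ioo hc, integrableOn_image_iff_integrableOn_abs_deriv_smul
    measurableSet_Ioo (fun t ht => (hasDerivAt_mul_div_one_sub c ht.2.ne).hasDerivWithinAt)
    (injOn_mul_div_one_sub hc.ne')]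
  exact IntegrableOn.congr_fun
    ((integrableOn_rpow_mul_one_sub_rpow hs (sub_pos.2 hsa)).const_mul _)
    (abs_deriv_smul_rpow_div_add_rpow_eqOn a s hc).symm measurableSet_Ioo

lemma integral_rpow_div_add_rpow_Ioi (hs : 0 < s) (hsa : s < a) (hc : 0 < c) :
    ∫ x in Ioi (0 : ℝ), x ^ (s - 1) / (x + c) ^ a =
      c ^ (s - a) * (Gamma s * Gamma (a - s) / Gamma a) := by
  rw [← image_mul_div_one_sub_Ioo hc, integral_image_eq_integral_abs_deriv_smul
    measurableSet_Ioo (fun t ht => (hasDerivAt_mul_div_one_sub c ht.2.ne).hasDerivWithinAt)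
    (injOn_mul_div_one_sub hc.ne'), setIntegral_congr_fun measurableSet_Ioo
    (abs_deriv_smul_rpow_div_add_rpow_eqOn a s hc), integral_const_mul,
    integral_rpow_mul_one_sub_rpow hs (sub_pos.2 hsa), add_sub_cancel]

lemma integrableOn_rpow_div_add_Ioi (hs0 : 0 < s) (hs1 : s < 1) (hc : 0 < c) :
    IntegrableOn (fun x : ℝ => x ^ (s - 1) / (x + c)) (Ioi 0) := by
  simpa only [rpow_one] using integrableOn_rpow_div_add_rpow_Ioi hs0 hs1 hc

lemma integral_rpow_div_add_Ioi (hs0 : 0 < s) (hs1 : s < 1) (hc : 0 < c) :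
    ∫ x in Ioi (0 : ℝ), x ^ (s - 1) / (x + c) = π * c ^ (s - 1) / sin (π * s) := by
  have h := integral_rpow_div_add_rpow_Ioi hs0 hs1 hc
  simp only [rpow_one, Gamma_one, div_one, Gamma_mul_Gamma_one_sub] at h
  rw [h]
  ring

lemma integrableOn_rpow_div_add_sq_Ioi (hs0 : 0 < s) (hs2 : s < 2) (hc : 0 < c) :
    IntegrableOn (fun x : ℝ => x ^ (s - 1) / (x + c) ^ 2) (Ioi 0) := by
  simpa only [rpow_two] using integrableOn_rpow_div_add_rpow_Ioi hs0 hs2 hc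

lemma integral_rpow_div_add_sq_Ioi (hs0 : 0 < s) (hs2 : s < 2) (hs1 : s ≠ 1) (hc : 0 < c) :
    ∫ x in Ioi (0 : ℝ), x ^ (s - 1) / (x + c) ^ 2 = π * (1 - s) * c ^ (s - 2) / sin (π * s) := by
  have h := integral_rpow_div_add_rpow_Ioi hs0 hs2 hc
  have hΓ : Gamma (2 - s) = (1 - s) * Gamma (1 - s) := by
    rw [show 2 - s = (1 - s) + 1 by ring, Gamma_add_one (sub_ne_zero.2 hs1.symm)]
  simp only [rpow_two] at h
  rw [h, hΓ, Gamma_two, mul_left_comm, Gamma_mul_Gamma_one_sub]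
  ring

end Substitution

lemma integrableOn_and_setIntegral_eq_of_eqOn_sub {f g h : ℝ → ℝ} {S : Set ℝ}
    (hS : MeasurableSet S) {k l : ℝ} (hf : EqOn f (fun x => k * g x - l * h x) S)
    (hg : IntegrableOn g S) (hh : IntegrableOn h S) :
    IntegrableOn f S ∧ ∫ x in S, f x = k * (∫ x in S, g x) - l * ∫ x in S, h x := by
  refine ⟨IntegrableOn.congr_fun ((hg.const_mul k).sub (hh.const_mul l)) hf.symm hS, ?_⟩
  rw [setIntegral_congr_fun hS hf, integral_sub (hg.const_mul k) (hh.const_mul l),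
    integral_const_mul, integral_const_mul]

section TwoFactors

variable {s b γ : ℝ}

lemma integrableOn_and_integral_rpow_div_add_mul_add_Ioi_of_lt_one (hs0 : 0 < s) (hs1 : s < 1)
    (hb : 0 < b) (hγ : 0 < γ) (hne : b ≠ γ) :
    IntegrableOn (fun x : ℝ => x ^ (s - 1) / ((x + b) * (x + γ))) (Ioi 0) ∧
      ∫ x in Ioi (0 : ℝ), x ^ (s - 1) / ((x + b) * (x + γ)) =
        π * (b ^ (s - 1) - γ ^ (s - 1)) / (sin (π * s) * (γ - b)) := by
  have hγb : γ - b ≠ 0 := sub_ne_zero.2 hne.symm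
  have hpf : EqOn (fun x : ℝ => x ^ (s - 1) / ((x + b) * (x + γ)))
      (fun x => (γ - b)⁻¹ * (x ^ (s - 1) / (x + b)) - (γ - b)⁻¹ * (x ^ (s - 1) / (x + γ)))
      (Ioi 0) := by
    intro x (hx : 0 < x)
    have : x + b ≠ 0 := by positivity
    have : x + γ ≠ 0 := by positivity
    field_simp
    ring
  obtain ⟨hint, hval⟩ := integrableOn_and_setIntegral_eq_of_eqOn_sub measurableSet_Ioi hpf
    (integrableOn_rpow_div_add_Ioi hs0 hs1 hb) (integrableOn_rpow_div_add_Ioi hs0 hs1 hγ)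
  refine ⟨hint, ?_⟩
  rw [hval, integral_rpow_div_add_Ioi hs0 hs1 hb, integral_rpow_div_add_Ioi hs0 hs1 hγ]
  field_simp

/-- For `1 < s` the pieces `x^(s-1) / (x + b)` are not integrable, so one factor `x` is moved into
the fraction: `x / ((x + b)(x + γ)) = (γ / (x + γ) - b / (x + b)) / (γ - b)`. -/
lemma integrableOn_and_integral_rpow_div_add_mul_add_Ioi_of_one_lt (hs1 : 1 < s) (hs2 : s < 2)
    (hb : 0 < b) (hγ : 0 < γ) (hne : b ≠ γ) :
    IntegrableOn (fun x : ℝ => x ^ (s - 1) / ((x + b) * (x + γ))) (Ioi 0) ∧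
      ∫ x in Ioi (0 : ℝ), x ^ (s - 1) / ((x + b) * (x + γ)) =
        π * (b ^ (s - 1) - γ ^ (s - 1)) / (sin (π * s) * (γ - b)) := by
  have ht0 : 0 < s - 1 := by linarith
  have ht1 : s - 1 < 1 := by linarith
  have hγb : γ - b ≠ 0 := sub_ne_zero.2 hne.symm
  have hpf : EqOn (fun x : ℝ => x ^ (s - 1) / ((x + b) * (x + γ)))
      (fun x => γ / (γ - b) * (x ^ (s - 1 - 1) / (x + γ))
        - b / (γ - b) * (x ^ (s - 1 - 1) / (x + b)))
      (Ioi 0) := by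
    intro x (hx : 0 < x)
    have : x + b ≠ 0 := by positivity
    have : x + γ ≠ 0 := by positivity
    simp only [rpow_sub_one hx.ne' (s - 1)]
    field_simp
    ring
  obtain ⟨hint, hval⟩ := integrableOn_and_setIntegral_eq_of_eqOn_sub measurableSet_Ioi hpf
    (integrableOn_rpow_div_add_Ioi ht0 ht1 hγ) (integrableOn_rpow_div_add_Ioi ht0 ht1 hb)
  refine ⟨hint, ?_⟩
  rw [hval, integral_rpow_div_add_Ioi ht0 ht1 hγ, integral_rpow_div_add_Ioi ht0 ht1 hb,
    show π * (s - 1) = π * s - π by ring, sin_sub_pi, rpow_sub_one hγ.ne' (s - 1),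
    rpow_sub_one hb.ne' (s - 1)]
  field_simp
  ring

lemma integrableOn_and_integral_rpow_div_add_mul_add_Ioi (hs0 : 0 < s) (hs2 : s < 2) (hs1 : s ≠ 1)
    (hb : 0 < b) (hγ : 0 < γ) (hne : b ≠ γ) :
    IntegrableOn (fun x : ℝ => x ^ (s - 1) / ((x + b) * (x + γ))) (Ioi 0) ∧
      ∫ x in Ioi (0 : ℝ), x ^ (s - 1) / ((x + b) * (x + γ)) =
        π * (b ^ (s - 1) - γ ^ (s - 1)) / (sin (π * s) * (γ - b)) := by
  rcases hs1.lt_or_gt with h | h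
  · exact integrableOn_and_integral_rpow_div_add_mul_add_Ioi_of_lt_one hs0 h hb hγ hne
  · exact integrableOn_and_integral_rpow_div_add_mul_add_Ioi_of_one_lt h hs2 hb hγ hne

end TwoFactors

theorem stmt12 (v b γ : ℝ) (hv0 : 0 < v) (hv2 : v < 2) (hv1 : v ≠ 1) (hb : 0 < b)
    (hγ : 0 < γ) (hne : b ≠ γ) :
    ∫ x in Set.Ioi (0:ℝ), x ^ (v - 1) / ((x + b) * (x + γ) ^ 2) =
      (π * b ^ (v - 1) / (Real.sin (π * v) * (γ - b) ^ 2)) *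
        (1 - (γ / b) ^ (v - 1) * (1 + (1 - v) * (γ - b) / γ)) := by
  have hγb : γ - b ≠ 0 := sub_ne_zero.2 hne.symm
  have hpf : EqOn (fun x : ℝ => x ^ (v - 1) / ((x + b) * (x + γ) ^ 2))
      (fun x => (γ - b)⁻¹ * (x ^ (v - 1) / ((x + b) * (x + γ)))
        - (γ - b)⁻¹ * (x ^ (v - 1) / (x + γ) ^ 2)) (Ioi 0) := by
    intro x (hx : 0 < x)
    have : x + b ≠ 0 := by positivity
    have : x + γ ≠ 0 := by positivity
    field_simp
    ring
  obtain ⟨hJint, hJ⟩ := integrableOn_and_integral_rpow_div_add_mul_add_Ioi hv0 hv2 hv1 hb hγ hne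
  rw [(integrableOn_and_setIntegral_eq_of_eqOn_sub measurableSet_Ioi hpf hJint
      (integrableOn_rpow_div_add_sq_Ioi hv0 hv2 hγ)).2, hJ,
    integral_rpow_div_add_sq_Ioi hv0 hv2 hv1 hγ, div_rpow hγ.le hb.le,
    show v - 2 = v - 1 - 1 by ring, rpow_sub_one hγ.ne' (v - 1)]
  have : b ^ (v - 1) ≠ 0 := by positivity
  field_simp
  ring
end

section
/- For real α > 0 and θ ∈ (0, π), ∫₀^∞ log(x) / (x² + 2αx cos(θ) + α²) dx = θ·log(α) / (α sin θ). -/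
/-!
Scaling `x = α u` reduces the integral to the case `α = 1`, with denominator
`u ^ 2 + 2 u cos θ + 1 = (u + cos θ) ^ 2 + sin θ ^ 2`. Its reciprocal has the antiderivative
`arctan ((u + cos θ) / sin θ) / sin θ`, which gives `∫ 1 / (…) = θ / sin θ`, while
`∫ log u / (…) = 0` because the substitution `u ↦ 1 / u` maps this integrand to its negative.
-/

open MeasureTheory Real Set Filter Topology Asymptotics

theorem integral_log_mul_eq_zero_of_comp_inv (f : ℝ → ℝ)
    (hf : ∀ x ∈ Ioi (0 : ℝ), f x⁻¹ = x ^ 2 * f x) :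
    ∫ x in Ioi (0 : ℝ), log x * f x = 0 := by
  have hsubst := integral_comp_rpow_Ioi (fun x => log x * f x) (p := -1) (by norm_num)
  have hneg : ∀ x ∈ Ioi (0 : ℝ),
      (|(-1 : ℝ)| * x ^ ((-1 : ℝ) - 1)) • (log (x ^ (-1 : ℝ)) * f (x ^ (-1 : ℝ))) =
        -(log x * f x) := by
    intro x hx
    have hx0 : x ≠ 0 := (mem_Ioi.mp hx).ne'
    rw [rpow_neg_one, log_inv, hf x hx, show (-1 : ℝ) - 1 = ((-2 : ℤ) : ℝ) by norm_num,
      rpow_intCast, smul_eq_mul, abs_neg, abs_one, one_mul]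
    field_simp
  rw [setIntegral_congr_fun measurableSet_Ioi hneg, integral_neg] at hsubst
  linarith

theorem integrableOn_log_mul_of_isBigO_rpow {f : ℝ → ℝ} {a b : ℝ}
    (hfc : ContinuousOn f (Ioi 0)) (hf_top : f =O[atTop] (· ^ (-a))) (ha : 1 < a)
    (hf_bot : f =O[𝓝[>] 0] (· ^ (-b))) (hb : b < 1) :
    IntegrableOn (fun x => log x * f x) (Ioi 0) := by
  obtain ⟨a', ha', ha'a⟩ := exists_between ha
  obtain ⟨b', hbb', hb'⟩ := exists_between hb
  have hlogc : ContinuousOn (fun x => log x * f x) (Ioi 0) :=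
    (continuousOn_log.mono fun _ hx => ne_of_gt hx).mul hfc
  simpa using mellin_convergent_of_isBigO_scalar (s := 1)
    (hlogc.locallyIntegrableOn measurableSet_Ioi) (isBigO_rpow_top_log_smul ha'a hf_top) ha'
    (isBigO_rpow_zero_log_smul hbb' hf_bot) hb'

noncomputable def cosQuad (θ u : ℝ) : ℝ := u ^ 2 + 2 * u * cos θ + 1

section cosQuad

variable {θ : ℝ}

theorem cosQuad_eq (θ u : ℝ) : cosQuad θ u = (u + cos θ) ^ 2 + sin θ ^ 2 := by
  rw [cosQuad]
  linear_combination -cos_sq_add_sin_sq θ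

theorem cosQuad_pos (hθ : sin θ ≠ 0) (u : ℝ) : 0 < cosQuad θ u := by
  rw [cosQuad_eq]
  positivity

theorem cosQuad_inv (θ : ℝ) {u : ℝ} (hu : u ≠ 0) : cosQuad θ u⁻¹ = cosQuad θ u / u ^ 2 := by
  simp only [cosQuad]
  field_simp
  ring

theorem continuous_cosQuad (θ : ℝ) : Continuous (cosQuad θ) := by
  unfold cosQuad
  fun_prop

theorem hasDerivAt_arctan_div_sin (hθ : sin θ ≠ 0) (u : ℝ) :
    HasDerivAt (fun u => arctan ((u + cos θ) / sin θ) / sin θ) (cosQuad θ u)⁻¹ u := by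
  have hlin : HasDerivAt (fun u => (u + cos θ) / sin θ) (1 / sin θ) u := by
    simpa using ((hasDerivAt_id u).add_const (cos θ)).div_const (sin θ)
  refine (((hasDerivAt_arctan _).comp u hlin).div_const (sin θ)).congr_deriv ?_
  have := cosQuad_pos hθ u
  rw [cosQuad_eq] at this ⊢
  field_simp
  ring

theorem tendsto_arctan_div_sin (hθ : 0 < sin θ) :
    Tendsto (fun u => arctan ((u + cos θ) / sin θ) / sin θ) atTop (𝓝 (π / 2 / sin θ)) :=
  ((tendsto_arctan_atTop.mono_right nhdsWithin_le_nhds).comp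
    ((tendsto_atTop_add_const_right _ _ tendsto_id).atTop_div_const hθ)).div_const _

theorem arctan_cos_div_sin (hθ : θ ∈ Ioo 0 π) : arctan (cos θ / sin θ) = π / 2 - θ := by
  rw [← cos_pi_div_two_sub, ← sin_pi_div_two_sub, ← tan_eq_sin_div_cos,
    arctan_tan (by linarith [hθ.2]) (by linarith [hθ.1])]

theorem integrableOn_inv_cosQuad (hθ : θ ∈ Ioo 0 π) :
    IntegrableOn (fun u => (cosQuad θ u)⁻¹) (Ioi 0) := by
  have hs := sin_pos_of_pos_of_lt_pi hθ.1 hθ.2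
  exact integrableOn_Ioi_deriv_of_nonneg' (fun u _ => hasDerivAt_arctan_div_sin hs.ne' u)
    (fun u _ => (inv_pos.mpr (cosQuad_pos hs.ne' u)).le) (tendsto_arctan_div_sin hs)

theorem integral_inv_cosQuad (hθ : θ ∈ Ioo 0 π) :
    ∫ u in Ioi (0 : ℝ), (cosQuad θ u)⁻¹ = θ / sin θ := by
  have hs := sin_pos_of_pos_of_lt_pi hθ.1 hθ.2
  rw [integral_Ioi_of_hasDerivAt_of_nonneg' (fun u _ => hasDerivAt_arctan_div_sin hs.ne' u)
    (fun u _ => (inv_pos.mpr (cosQuad_pos hs.ne' u)).le) (tendsto_arctan_div_sin hs)]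
  simp only [zero_add, arctan_cos_div_sin hθ]
  ring

theorem inv_cosQuad_isBigO_atTop (θ : ℝ) :
    (fun u => (cosQuad θ u)⁻¹) =O[atTop] (· ^ (-2 : ℝ)) := by
  refine IsBigO.of_bound 4 ?_
  filter_upwards [eventually_ge_atTop 2] with u hu
  have hsq : u ^ 2 ≤ 4 * cosQuad θ u := by
    unfold cosQuad
    nlinarith [neg_one_le_cos θ]
  have hpos : 0 < cosQuad θ u := by nlinarith
  rw [rpow_neg (by linarith), rpow_two, norm_inv, norm_inv, Real.norm_of_nonneg hpos.le,
    Real.norm_of_nonneg (by positivity), inv_le_iff_one_le_mul₀ hpos]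
  field_simp
  linarith

theorem inv_cosQuad_isBigO_nhdsGT_zero (θ : ℝ) :
    (fun u => (cosQuad θ u)⁻¹) =O[𝓝[>] 0] (· ^ (-0 : ℝ)) := by
  simp only [neg_zero, rpow_zero]
  exact (((continuous_cosQuad θ).continuousAt.inv₀ (by simp [cosQuad])).tendsto.mono_left
    nhdsWithin_le_nhds).isBigO_one ℝ

theorem integrableOn_log_mul_inv_cosQuad (hθ : sin θ ≠ 0) :
    IntegrableOn (fun u => log u * (cosQuad θ u)⁻¹) (Ioi 0) :=
  integrableOn_log_mul_of_isBigO_rpow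
    ((continuous_cosQuad θ).inv₀ fun u => (cosQuad_pos hθ u).ne').continuousOn
    (inv_cosQuad_isBigO_atTop θ) one_lt_two (inv_cosQuad_isBigO_nhdsGT_zero θ) zero_lt_one

theorem integral_log_mul_inv_cosQuad (θ : ℝ) :
    ∫ u in Ioi (0 : ℝ), log u * (cosQuad θ u)⁻¹ = 0 :=
  integral_log_mul_eq_zero_of_comp_inv _ fun u hu => by
    rw [cosQuad_inv θ (mem_Ioi.mp hu).ne', inv_div, div_eq_mul_inv]

end cosQuad

theorem stmt16 (α θ : ℝ) (hα : 0 < α) (hθ : θ ∈ Set.Ioo 0 π) :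
    ∫ x in Set.Ioi (0:ℝ), Real.log x / (x ^ 2 + 2 * α * x * Real.cos θ + α ^ 2) =
      θ * Real.log α / (α * Real.sin θ) := by
  have hs := sin_pos_of_pos_of_lt_pi hθ.1 hθ.2
  have hscale : ∀ u ∈ Ioi (0 : ℝ),
      log (α * u) / ((α * u) ^ 2 + 2 * α * (α * u) * cos θ + α ^ 2) =
        (α ^ 2)⁻¹ * (log α * (cosQuad θ u)⁻¹ + log u * (cosQuad θ u)⁻¹) := by
    intro u hu
    have := cosQuad_pos hs.ne' u
    rw [log_mul hα.ne' (mem_Ioi.mp hu).ne']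
    unfold cosQuad at this ⊢
    field_simp
  have hsubst := integral_comp_mul_left_Ioi'
    (fun x => log x / (x ^ 2 + 2 * α * x * cos θ + α ^ 2)) 0 hα
  rw [mul_zero, setIntegral_congr_fun measurableSet_Ioi hscale, integral_const_mul,
    integral_add ((integrableOn_inv_cosQuad hθ).const_mul _)
      (integrableOn_log_mul_inv_cosQuad hs.ne'),
    integral_const_mul, integral_inv_cosQuad hθ, integral_log_mul_inv_cosQuad,
    smul_eq_mul, add_zero] at hsubst
  rw [← hsubst]
  field_simp
end
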